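/- Suppose 0 < Z_SD < Z_SR and Z_RD > 0, S > 0, and fix t1, t2 > 0 with t1 + t2 = 1 satisfying t2·C(Z_RD·S/(1 + Z_SD·S)) ≤ t1·C(Z_SR·S). Then the supremum of x1 + x2 + x3 over all feasible tuples (α, x1, x2, x3) (with these fixed slot lengths t1, t2) equals t1·log( (1 + Z_SD·S) / ( 1 + (Z_SD/Z_SR)·[ (1 + Z_RD·S/(1 + Z_SD·S))^{t2/t1} − 1 ] ) ) + t2·C((Z_SD + Z_RD)·S). -/

import Mathlib

open Real

/-- Shannon-type capacity function `C(x) = log (1 + x)` (natural logarithm). -/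
noncomputable def capC (x : ℝ) : ℝ := Real.log (1 + x)

/-- Feasibility of a tuple `(t1, t2, α, x1, x2, x3)` for the three-node
flow optimization problem with link gains `ZSD, ZSR, ZRD` and transmit SNR `S`. -/
def Feasible (ZSD ZSR ZRD S t1 t2 α x1 x2 x3 : ℝ) : Prop :=
  0 ≤ t1 ∧ 0 ≤ t2 ∧ t1 + t2 = 1 ∧ 0 ≤ α ∧ α ≤ 1 ∧
  0 ≤ x1 ∧ 0 ≤ x2 ∧ 0 ≤ x3 ∧
  x2 ≤ t2 * capC (ZRD * S) ∧
  x3 ≤ t2 * capC (ZSD * S) ∧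
  x2 + x3 ≤ t2 * capC ((ZSD + ZRD) * S) ∧
  (ZSR ≤ ZSD →
    x1 ≤ t1 * capC (ZSD * α * S) ∧
    x2 ≤ t1 * capC (ZSR * (1 - α) * S / (1 + ZSR * α * S))) ∧
  (ZSD < ZSR →
    x1 ≤ t1 * capC (ZSD * α * S / (1 + ZSD * (1 - α) * S)) ∧
    x2 ≤ t1 * capC (ZSR * (1 - α) * S))

/-!
Parametrise the broadcast power split by the relay's share `u = (1 - α) S ∈ [0, S]`.
By the chain rule `C(x) + C(y / (1 + x)) = C(x + y)` the broadcast bounds read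
`x1 ≤ t1 (C(Z_SD S) - C(Z_SD u))` and `x2 ≤ t1 C(Z_SR u)`, while the multiple-access bounds give
`x3 ≤ t2 C(Z_SD S)` and `x2 + x3 ≤ t2 (C(Z_SD S) + C(Z_RD S / (1 + Z_SD S)))`.
Let `w` balance the relay link, `t1 C(Z_SR w) = t2 C(Z_RD S / (1 + Z_SD S))`; explicitly
`1 + Z_SR w = (1 + Z_RD S / (1 + Z_SD S)) ^ (t2 / t1)`, and the case hypothesis says `w ≤ S`.
For `u ≤ w` the rate is at most `t1 (C(Z_SD S) - C(Z_SD u) + C(Z_SR u)) + t2 C(Z_SD S)`, which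
increases in `u` because `Z_SD < Z_SR`; for `u ≥ w` the sum bound on `x2 + x3` binds and `x1`
decreases in `u`. Both bounds meet at `u = w`, where they are attained.
-/

theorem capC_nonneg {x : ℝ} (hx : 0 ≤ x) : 0 ≤ capC x :=
  Real.log_nonneg (by linarith)

theorem capC_le_capC_iff {x y : ℝ} (hx : -1 < x) (hy : -1 < y) : capC x ≤ capC y ↔ x ≤ y := by
  rw [capC, capC, Real.log_le_log_iff (by linarith) (by linarith), add_le_add_iff_left]

theorem capC_le_capC {x y : ℝ} (hx : -1 < x) (hxy : x ≤ y) : capC x ≤ capC y :=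
  (capC_le_capC_iff hx (hx.trans_le hxy)).2 hxy

theorem capC_add_capC_div {x y : ℝ} (hx : 0 < 1 + x) (hy : 0 ≤ y) :
    capC x + capC (y / (1 + x)) = capC (x + y) := by
  have hxy : 1 + y / (1 + x) = (1 + (x + y)) / (1 + x) := by field_simp; ring
  rw [capC, capC, capC, hxy, Real.log_div (by linarith) hx.ne', add_sub_cancel]

theorem capC_mul_sub_capC_mul_monotoneOn {a c : ℝ} (ha : 0 ≤ a) (hac : a ≤ c) :
    MonotoneOn (fun u ↦ capC (c * u) - capC (a * u)) (Set.Ici 0) := by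
  intro p (hp : 0 ≤ p) q (hq : 0 ≤ q) hpq
  have hap : 0 < 1 + a * p := by positivity
  have haq : 0 < 1 + a * q := by positivity
  have hcp : 0 < 1 + c * p := by nlinarith
  have hcq : 0 < 1 + c * q := by nlinarith
  simp only [capC, ← Real.log_div hcp.ne' hap.ne', ← Real.log_div hcq.ne' haq.ne']
  apply Real.log_le_log (div_pos hcp hap)
  rw [div_le_div_iff₀ hap haq]
  nlinarith [mul_nonneg (sub_nonneg.2 hac) (sub_nonneg.2 hpq)]

theorem mul_capC_rpow_sub_one {t1 t2 y : ℝ} (ht1 : t1 ≠ 0) (hy : 0 < 1 + y) :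
    t1 * capC ((1 + y) ^ (t2 / t1) - 1) = t2 * capC y := by
  rw [capC, capC, add_sub_cancel, Real.log_rpow hy]
  field_simp

theorem capC_add_eq_capC_add_capC_div {a b S : ℝ} (ha : 0 ≤ a) (hb : 0 ≤ b) (hS : 0 ≤ S) :
    capC ((a + b) * S) = capC (a * S) + capC (b * S / (1 + a * S)) := by
  rw [capC_add_capC_div (by positivity) (by positivity), add_mul]

theorem capC_superposition_eq_sub {a α S : ℝ} (ha : 0 ≤ a) (hα0 : 0 ≤ α) (hα1 : α ≤ 1)
    (hS : 0 ≤ S) :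
    capC (a * α * S / (1 + a * (1 - α) * S)) = capC (a * S) - capC (a * ((1 - α) * S)) := by
  have h1α : 0 ≤ 1 - α := sub_nonneg.2 hα1
  have h := capC_add_capC_div (x := a * (1 - α) * S) (y := a * α * S) (by positivity)
    (by positivity)
  rw [show a * (1 - α) * S + a * α * S = a * S by ring] at h
  rw [← h, ← mul_assoc]
  ring

theorem rate_le_of_feasible {ZSD ZSR ZRD S t1 t2 α x1 x2 x3 w : ℝ} (hZSD : 0 ≤ ZSD)
    (hZ : ZSD < ZSR) (hZRD : 0 ≤ ZRD) (hS : 0 ≤ S) (hw0 : 0 ≤ w)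
    (hw : t1 * capC (ZSR * w) = t2 * capC (ZRD * S / (1 + ZSD * S)))
    (hF : Feasible ZSD ZSR ZRD S t1 t2 α x1 x2 x3) :
    x1 + x2 + x3 ≤ t1 * (capC (ZSD * S) - capC (ZSD * w)) + t2 * capC ((ZSD + ZRD) * S) := by
  obtain ⟨ht1, -, -, hα0, hα1, -, -, -, -, hx3, hx23, -, hbroadcast⟩ := hF
  obtain ⟨hx1, hx2⟩ := hbroadcast hZ
  set u := (1 - α) * S
  have hu0 : 0 ≤ u := mul_nonneg (by linarith) hS
  rw [capC_superposition_eq_sub hZSD hα0 hα1 hS] at hx1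
  rw [mul_assoc] at hx2
  rw [capC_add_eq_capC_add_capC_div hZSD hZRD hS] at hx23 ⊢
  rcases le_total u w with huw | hwu
  · have hgain :
        t1 * (capC (ZSR * u) - capC (ZSD * u)) ≤ t1 * (capC (ZSR * w) - capC (ZSD * w)) :=
      mul_le_mul_of_nonneg_left (capC_mul_sub_capC_mul_monotoneOn hZSD hZ.le hu0 hw0 huw) ht1
    linarith
  · have hloss : capC (ZSD * w) ≤ capC (ZSD * u) :=
      capC_le_capC (by nlinarith) (mul_le_mul_of_nonneg_left hwu hZSD)
    linarith [mul_le_mul_of_nonneg_left hloss ht1]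

theorem feasible_at_balanced_split {ZSD ZSR ZRD S t1 t2 w : ℝ} (hZSD : 0 ≤ ZSD)
    (hZ : ZSD < ZSR) (hZRD : 0 ≤ ZRD) (hS : 0 < S) (ht1 : 0 ≤ t1) (ht2 : 0 ≤ t2)
    (ht : t1 + t2 = 1) (hw0 : 0 ≤ w) (hwS : w ≤ S)
    (hw : t1 * capC (ZSR * w) = t2 * capC (ZRD * S / (1 + ZSD * S))) :
    Feasible ZSD ZSR ZRD S t1 t2 (1 - w / S) (t1 * (capC (ZSD * S) - capC (ZSD * w)))
      (t2 * capC (ZRD * S / (1 + ZSD * S))) (t2 * capC (ZSD * S)) := by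
  have hα0 : 0 ≤ 1 - w / S := sub_nonneg.2 ((div_le_one hS).2 hwS)
  have hα1 : 1 - w / S ≤ 1 := sub_le_self _ (div_nonneg hw0 hS.le)
  have hrelay : (1 - (1 - w / S)) * S = w := by field_simp; ring
  have hSD : 0 < 1 + ZSD * S := by positivity
  refine ⟨ht1, ht2, ht, hα0, hα1, ?_, ?_, ?_, ?_, le_rfl, ?_, fun h ↦ absurd h hZ.not_ge, ?_⟩
  · exact mul_nonneg ht1 (sub_nonneg.2
      (capC_le_capC (by nlinarith) (mul_le_mul_of_nonneg_left hwS hZSD)))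
  · exact mul_nonneg ht2 (capC_nonneg (by positivity))
  · exact mul_nonneg ht2 (capC_nonneg (by positivity))
  · have hy : 0 ≤ ZRD * S / (1 + ZSD * S) := by positivity
    exact mul_le_mul_of_nonneg_left
      (capC_le_capC (by linarith) (div_le_self (by positivity) (by nlinarith))) ht2
  · rw [capC_add_eq_capC_add_capC_div hZSD hZRD hS.le]
    linarith
  · intro _
    rw [capC_superposition_eq_sub hZSD hα0 hα1 hS.le, mul_assoc, hrelay, hw]
    exact ⟨le_rfl, le_rfl⟩

/-- When `0 < Z_SD < Z_SR`, for fixed slot lengths `t1, t2 > 0`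
with `t1 + t2 = 1` and `t2·C(Z_RD·S/(1+Z_SD·S)) ≤ t1·C(Z_SR·S)`, the maximum
achievable rate (over `α, x1, x2, x3`) equals
`t1·log((1+Z_SD·S)/(1+(Z_SD/Z_SR)·[(1+Z_RD·S/(1+Z_SD·S))^(t2/t1) − 1]))
  + t2·C((Z_SD+Z_RD)·S)`. -/
theorem sup_rate_fixed_slots_small_t2
    (ZSD ZSR ZRD S t1 t2 : ℝ) (hZSD : 0 < ZSD) (hZ : ZSD < ZSR) (hZRD : 0 < ZRD)
    (hS : 0 < S) (ht1 : 0 < t1) (ht2 : 0 < t2) (ht : t1 + t2 = 1)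
    (hcase : t2 * capC (ZRD * S / (1 + ZSD * S)) ≤ t1 * capC (ZSR * S)) :
    sSup {x : ℝ | ∃ α x1 x2 x3 : ℝ,
        Feasible ZSD ZSR ZRD S t1 t2 α x1 x2 x3 ∧ x = x1 + x2 + x3}
      = t1 * Real.log ((1 + ZSD * S) /
          (1 + (ZSD / ZSR) *
            ((1 + ZRD * S / (1 + ZSD * S)) ^ (t2 / t1) - 1)))
        + t2 * capC ((ZSD + ZRD) * S) := by
  have hZSR : 0 < ZSR := hZSD.trans hZ
  set y := ZRD * S / (1 + ZSD * S)
  have hy : 0 ≤ y := by positivity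
  set w := ((1 + y) ^ (t2 / t1) - 1) / ZSR with hw_def
  have hw : t1 * capC (ZSR * w) = t2 * capC y := by
    rw [mul_div_cancel₀ _ hZSR.ne', mul_capC_rpow_sub_one ht1.ne' (by linarith)]
  have hw0 : 0 ≤ w :=
    div_nonneg (sub_nonneg.2 (Real.one_le_rpow (by linarith) (by positivity))) hZSR.le
  have hwS : w ≤ S := by
    have := le_of_mul_le_mul_left (hw ▸ hcase) ht1
    rw [capC_le_capC_iff (by nlinarith) (by nlinarith)] at this
    exact le_of_mul_le_mul_left this hZSR
  have hvalue : Real.log ((1 + ZSD * S) / (1 + ZSD / ZSR * ((1 + y) ^ (t2 / t1) - 1)))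
      = capC (ZSD * S) - capC (ZSD * w) := by
    rw [capC, capC, ← Real.log_div (by positivity) (by positivity), hw_def, mul_div_assoc']
    ring_nf
  rw [hvalue]
  refine IsGreatest.csSup_eq ⟨⟨1 - w / S, _, _, _,
    feasible_at_balanced_split hZSD.le hZ hZRD.le hS ht1.le ht2.le ht hw0 hwS hw, ?_⟩, ?_⟩
  · rw [capC_add_eq_capC_add_capC_div hZSD.le hZRD.le hS.le]
    ring
  · rintro _ ⟨α, x1, x2, x3, hF, rfl⟩
    exact rate_le_of_feasible hZSD.le hZ hZRD.le hS.le hw0 hw hF
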